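/- arXiv:2005.13100 — 3 statements merged into one kernel-verified Lean document; each statement's English description precedes it below -/
import Mathlib

section
/- Let m > 0, let X be a random variable uniformly distributed on [-1,1], and let W be an independent Gaussian random variable with mean 0 and variance m². Then the second moment of cos(π W X) satisfies E[cos²(π W X)] = 1/2 + erf(√2 m π) / (4 √(2π) m), where erf denotes the Gauss error function. -/
open Real MeasureTheory ProbabilityTheory

/-- The Gauss error function `erf(z) = (2/√π) ∫_0^z e^{-t²} dt`. -/
noncomputable def erf (z : ℝ) : ℝ := (2 / Real.sqrt π) * ∫ t in (0:ℝ)..z, Real.exp (-t ^ 2)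

/-!
Independence lets one average over `W` first, with `X = x` fixed. Since
`cos² θ = (1 + cos 2θ)/2` and the characteristic function of `N(0, m²)` is `s ↦ exp(-m² s²/2)`,
that average is `1/2 + exp(-(c x)²)/2` with `c = √2 m π`. Averaging over `x` uniform on `[-1, 1]`
and substituting `t = c x` turns the Gaussian integral into `√π erf c / (2c)`.
-/

open scoped NNReal

lemma ProbabilityTheory.IndepFun.integral_comp_eq_integral_integral
    {Ω β γ E : Type*} [MeasurableSpace Ω] [MeasurableSpace β] [MeasurableSpace γ]
    [NormedAddCommGroup E] [NormedSpace ℝ E] {μ : Measure Ω} [IsFiniteMeasure μ]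
    {X : Ω → β} {Y : Ω → γ} (hXY : IndepFun X Y μ) (hX : AEMeasurable X μ)
    (hY : AEMeasurable Y μ) {f : β × γ → E} (hf : Integrable f ((μ.map X).prod (μ.map Y))) :
    ∫ ω, f (X ω, Y ω) ∂μ = ∫ x, ∫ y, f (x, y) ∂(μ.map Y) ∂(μ.map X) := by
  have hjoint := (indepFun_iff_map_prod_eq_prod_map_map hX hY).mp hXY
  rw [← integral_prod f hf, ← hjoint,
    integral_map (hX.prodMk hY) (hjoint ▸ hf.aestronglyMeasurable)]

lemma MeasureTheory.pdf.IsUniform.integral_map_eq {Ω E F : Type*} [MeasurableSpace Ω]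
    [MeasurableSpace E] [NormedAddCommGroup F] [NormedSpace ℝ F] {P : Measure Ω} {μ : Measure E}
    {X : Ω → E} {s : Set E} (hX : pdf.IsUniform X s P μ) (g : E → F) :
    ∫ x, g x ∂(P.map X) = (μ s)⁻¹.toReal • ∫ x in s, g x ∂μ := by
  rw [hX, ProbabilityTheory.cond, integral_smul_measure]

lemma integral_cos_mul_gaussianReal (μ : ℝ) (v : ℝ≥0) (t : ℝ) :
    ∫ x, Real.cos (t * x) ∂(gaussianReal μ v) = Real.cos (t * μ) * Real.exp (-(v * t ^ 2 / 2)) := by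
  have hint : Integrable (fun x : ℝ => Complex.exp (t * x * Complex.I)) (gaussianReal μ v) :=
    (integrable_const (1 : ℝ)).mono' (by fun_prop) (.of_forall fun x => by
      rw [← Complex.ofReal_mul, Complex.norm_exp_ofReal_mul_I])
  calc ∫ x, Real.cos (t * x) ∂(gaussianReal μ v)
      = ∫ x, (Complex.exp (t * x * Complex.I)).re ∂(gaussianReal μ v) := by
        simp_rw [← Complex.ofReal_mul, Complex.exp_ofReal_mul_I_re]
    _ = (charFun (gaussianReal μ v) t).re := by
        rw [charFun_apply_real]
        exact integral_re hint
    _ = Real.cos (t * μ) * Real.exp (-(v * t ^ 2 / 2)) := by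
        rw [charFun_gaussianReal, Complex.exp_re]
        simp [← Complex.ofReal_pow]
        ring

lemma integral_cos_sq_mul_gaussianReal (μ : ℝ) (v : ℝ≥0) (t : ℝ) :
    ∫ x, Real.cos (t * x) ^ 2 ∂(gaussianReal μ v)
      = 1 / 2 + Real.cos (2 * t * μ) * Real.exp (-(2 * v * t ^ 2)) / 2 := by
  have hcos : ∀ x, Real.cos (t * x) ^ 2 = 1 / 2 + Real.cos (2 * t * x) / 2 := fun x => by
    rw [Real.cos_sq]; ring_nf
  have hint : Integrable (fun x => Real.cos (2 * t * x)) (gaussianReal μ v) :=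
    (integrable_const (1 : ℝ)).mono' (by fun_prop) (.of_forall fun x => by
      simpa using Real.abs_cos_le_one _)
  simp_rw [hcos]
  rw [integral_add (integrable_const _) (hint.div_const 2), integral_const, integral_div,
    integral_cos_mul_gaussianReal, probReal_univ, one_smul]
  ring_nf

lemma intervalIntegral_exp_neg_sq_neg_self (c : ℝ) :
    ∫ t in -c..c, Real.exp (-t ^ 2) = Real.sqrt π * erf c := by
  have hint : ∀ a b : ℝ, IntervalIntegrable (fun t => Real.exp (-t ^ 2)) volume a b :=
    fun a b => (by fun_prop : Continuous fun t : ℝ => Real.exp (-t ^ 2)).intervalIntegrable a b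
  have hsym : ∫ t in -c..0, Real.exp (-t ^ 2) = ∫ t in (0:ℝ)..c, Real.exp (-t ^ 2) := by
    have h := (intervalIntegral.integral_comp_neg (a := 0) (b := c) fun t => Real.exp (-t ^ 2)).symm
    simp only [neg_zero, neg_sq] at h
    exact h
  rw [← intervalIntegral.integral_add_adjacent_intervals (hint (-c) 0) (hint 0 c), hsym, erf]
  field_simp
  ring

lemma intervalIntegral_exp_neg_mul_sq_neg_one_one {c : ℝ} (hc : c ≠ 0) :
    ∫ x in (-1:ℝ)..1, Real.exp (-(x * c) ^ 2) = Real.sqrt π * erf c / c := by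
  rw [intervalIntegral.integral_comp_mul_right (fun t => Real.exp (-t ^ 2)) hc]
  simp [intervalIntegral_exp_neg_sq_neg_self, div_eq_inv_mul]

/-- If `X` is uniform on `[-1,1]`, `W` is Gaussian `N(0, m²)` with `m > 0`, and `X`, `W` are
independent, then `E[cos²(π W X)] = 1/2 + erf(√2 m π)/(4 √(2π) m)`. -/
theorem second_moment_cos_hidden_node
    {Ω : Type*} [MeasureSpace Ω] [IsProbabilityMeasure (ℙ : Measure Ω)]
    (m : ℝ) (hm : 0 < m) (X W : Ω → ℝ)
    (hX : MeasureTheory.pdf.IsUniform X (Set.Icc (-1:ℝ) 1) ℙ)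
    (hW : Measure.map W ℙ = gaussianReal 0 ⟨m ^ 2, sq_nonneg m⟩)
    (hindep : IndepFun X W ℙ) :
    ∫ ω, (Real.cos (π * W ω * X ω)) ^ 2 ∂ℙ =
      1 / 2 + erf (Real.sqrt 2 * m * π) / (4 * Real.sqrt (2 * π) * m) := by
  set v : ℝ≥0 := ⟨m ^ 2, sq_nonneg m⟩
  set c := Real.sqrt 2 * m * π
  have hc : c ≠ 0 := by positivity
  have hXm : AEMeasurable X ℙ := hX.aemeasurable (by simp) (by simp)
  have hWm : AEMeasurable W ℙ := aemeasurable_of_map_neZero (by rw [hW]; infer_instance)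
  have hf : Integrable (fun p : ℝ × ℝ => Real.cos (π * p.2 * p.1) ^ 2)
      ((Measure.map X ℙ).prod (Measure.map W ℙ)) :=
    .of_bound (by fun_prop) 1 (.of_forall fun p => by simp [Real.abs_cos_le_one])
  have hinner (x : ℝ) :
      ∫ w, Real.cos (π * w * x) ^ 2 ∂(Measure.map W ℙ) = 1 / 2 + Real.exp (-(x * c) ^ 2) / 2 := by
    simp_rw [hW, mul_right_comm π _ x, integral_cos_sq_mul_gaussianReal, mul_zero, Real.cos_zero,
      one_mul]
    have hv : (v : ℝ) = m ^ 2 := rfl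
    simp only [hv, c, mul_pow, Real.sq_sqrt zero_le_two]
    ring_nf
  calc ∫ ω, Real.cos (π * W ω * X ω) ^ 2 ∂ℙ
      = ∫ x, ∫ w, Real.cos (π * w * x) ^ 2 ∂(Measure.map W ℙ) ∂(Measure.map X ℙ) :=
        hindep.integral_comp_eq_integral_integral hXm hWm hf
    _ = ∫ x, (1 / 2 + Real.exp (-(x * c) ^ 2) / 2) ∂(Measure.map X ℙ) := by simp_rw [hinner]
    _ = 2⁻¹ * ∫ x in (-1:ℝ)..1, (1 / 2 + Real.exp (-(x * c) ^ 2) / 2) := by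
        rw [hX.integral_map_eq, Real.volume_Icc, integral_Icc_eq_integral_Ioc,
          ← intervalIntegral.integral_of_le (by norm_num)]
        norm_num
    _ = _ := by
        rw [intervalIntegral.integral_add intervalIntegrable_const
          ((by fun_prop : Continuous fun x => Real.exp (-(x * c) ^ 2) / 2).intervalIntegrable _ _),
          intervalIntegral.integral_const, intervalIntegral.integral_div,
          intervalIntegral_exp_neg_mul_sq_neg_one_one hc, smul_eq_mul, Real.sqrt_mul zero_le_two]
        simp only [c]
        field_simp
        linear_combination (4 * erf (Real.sqrt 2 * m * π)) * Real.mul_self_sqrt pi_pos.le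
end

section
/- There exists a unique m > 0 such that 1/3 = 1/2 + erf(√2 m π)/(4 √(2π) m) − ( erf(m π/√2) / (m √(2π)) )², and this solution satisfies 0.69 < m < 0.70. -/
open Real

/-!
Put `u = π²m²/2` and `G u = ∫₀¹ exp(-u x²) dx`, so that `E[cos(πWX)] = G u`. Substituting
`t = z x` gives `erf z = (2/√π) z G(z²)`, and the equation becomes `V u = 1/3` for the variance
`V u = 1/2 + G(4u)/2 - G(u)²`.

With `J u = ∫₀¹ x² exp(-u x²) dx`, the inequality `1 + s ≤ eˢ` gives
`(q - p) J q ≤ G p - G q ≤ (q - p) J p`, whence `V` is strictly increasing on `[p, q]` as soon as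
`J(4p) < G(q) J(q)`. The alternating Taylor series of `exp(-y)` bounds `G` and `J` at rational
points from both sides, which shows that `V` increases on `[1/2, 5]`, that `V < 1/3` on `(0, 1/2]`
and `V > 1/3` on `[5, ∞)`, and that `V - 1/3` changes sign between `2.3495` and `2.418`. These two
values of `u` correspond to `m = 0.69` and `m = 0.70`.
-/

open Finset intervalIntegral
open scoped Nat

noncomputable def expNegTaylor (n : ℕ) (y : ℝ) : ℝ :=
  ∑ k ∈ range (n + 1), (-y) ^ k / k !

theorem integral_neg_pow_div_factorial (k : ℕ) (y : ℝ) :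
    ∫ t in (0 : ℝ)..y, (-t) ^ k / k ! = -((-y) ^ (k + 1) / (k + 1)!) := by
  have h : (fun t : ℝ => (-t) ^ k / k !) = fun t => (-1 : ℝ) ^ k / k ! * t ^ k := by
    funext t; rw [neg_pow]; ring
  rw [h, integral_const_mul, integral_pow, neg_pow y, Nat.factorial_succ]
  push_cast
  field_simp
  ring

@[fun_prop]
theorem continuous_expNegTaylor (n : ℕ) : Continuous (expNegTaylor n) := by
  unfold expNegTaylor; fun_prop

theorem integral_expNegTaylor (n : ℕ) (y : ℝ) :
    ∫ t in (0 : ℝ)..y, expNegTaylor n t = 1 - expNegTaylor (n + 1) y := by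
  simp only [expNegTaylor]
  rw [integral_finsetSum fun k _ => Continuous.intervalIntegrable (by fun_prop) _ _]
  simp_rw [integral_neg_pow_div_factorial, sum_range_succ' _ (n + 1), sum_neg_distrib]
  simp

theorem expNegTaylor_alternating (n : ℕ) {y : ℝ} (hy : 0 ≤ y) :
    0 ≤ (-1) ^ n * (expNegTaylor n y - exp (-y)) := by
  induction n generalizing y with
  | zero => simpa [expNegTaylor] using exp_le_one_iff.2 (neg_nonpos.2 hy)
  | succ n ih =>
    have hexp : ∫ t in (0 : ℝ)..y, exp (-t) = 1 - exp (-y) := by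
      simp [integral_comp_neg fun t => exp t]
    have hstep : (-1) ^ (n + 1) * (expNegTaylor (n + 1) y - exp (-y)) =
        ∫ t in (0 : ℝ)..y, (-1) ^ n * (expNegTaylor n t - exp (-t)) := by
      rw [integral_const_mul, integral_sub (Continuous.intervalIntegrable (by fun_prop) _ _)
        (Continuous.intervalIntegrable (by fun_prop) _ _), integral_expNegTaylor, hexp]
      ring
    rw [hstep]
    exact integral_nonneg hy fun t ht => ih ht.1

noncomputable def gaussMoment (j : ℕ) (u : ℝ) : ℝ :=
  ∫ x in (0 : ℝ)..1, x ^ (2 * j) * exp (-(u * x ^ 2))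

noncomputable def gaussMomentTaylor (j n : ℕ) (u : ℝ) : ℝ :=
  ∑ k ∈ range (n + 1), (-u) ^ k / (k ! * (2 * k + 2 * j + 1))

theorem integral_mul_expNegTaylor (j n : ℕ) (u : ℝ) :
    ∫ x in (0 : ℝ)..1, x ^ (2 * j) * expNegTaylor n (u * x ^ 2) = gaussMomentTaylor j n u := by
  simp only [expNegTaylor, mul_sum]
  rw [integral_finsetSum fun k _ => Continuous.intervalIntegrable (by fun_prop) _ _]
  refine sum_congr rfl fun k _ => ?_
  have h : (fun x : ℝ => x ^ (2 * j) * ((-(u * x ^ 2)) ^ k / k !)) =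
      fun x => (-u) ^ k / k ! * x ^ (2 * k + 2 * j) := by
    funext x; rw [← neg_mul, mul_pow, pow_add, pow_mul, pow_mul]; ring
  rw [h, integral_const_mul, integral_pow]
  push_cast
  field_simp
  simp

theorem gaussMomentTaylor_alternating (j n : ℕ) {u : ℝ} (hu : 0 ≤ u) :
    0 ≤ (-1) ^ n * (gaussMomentTaylor j n u - gaussMoment j u) := by
  have h : (-1) ^ n * (gaussMomentTaylor j n u - gaussMoment j u) = ∫ x in (0 : ℝ)..1,
      x ^ (2 * j) * ((-1) ^ n * (expNegTaylor n (u * x ^ 2) - exp (-(u * x ^ 2)))) := by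
    rw [← integral_mul_expNegTaylor, gaussMoment, ← integral_sub
      (Continuous.intervalIntegrable (by fun_prop) _ _)
      (Continuous.intervalIntegrable (by fun_prop) _ _), ← integral_const_mul]
    congr 1; funext x; ring
  rw [h]
  refine integral_nonneg zero_le_one fun x _ =>
    mul_nonneg ?_ (expNegTaylor_alternating n (by positivity))
  rw [pow_mul]; positivity

theorem gaussMoment_le_gaussMomentTaylor (j : ℕ) {n : ℕ} (hn : Even n) {u : ℝ} (hu : 0 ≤ u) :
    gaussMoment j u ≤ gaussMomentTaylor j n u := by
  simpa [hn.neg_one_pow] using gaussMomentTaylor_alternating j n hu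

theorem gaussMomentTaylor_le_gaussMoment (j : ℕ) {n : ℕ} (hn : Odd n) {u : ℝ} (hu : 0 ≤ u) :
    gaussMomentTaylor j n u ≤ gaussMoment j u := by
  simpa [hn.neg_one_pow] using gaussMomentTaylor_alternating j n hu

theorem gaussMoment_nonneg (j : ℕ) (u : ℝ) : 0 ≤ gaussMoment j u :=
  integral_nonneg zero_le_one fun x _ => by rw [pow_mul]; positivity

theorem gaussMoment_antitone (j : ℕ) : Antitone (gaussMoment j) := fun p q hpq =>
  integral_mono_on zero_le_one (Continuous.intervalIntegrable (by fun_prop) _ _)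
    (Continuous.intervalIntegrable (by fun_prop) _ _) fun x _ => by rw [pow_mul]; gcongr

theorem gaussMoment_zero_zero : gaussMoment 0 0 = 1 := by
  simp [gaussMoment]

@[fun_prop]
theorem continuous_gaussMoment (j : ℕ) : Continuous (gaussMoment j) :=
  continuous_parametric_intervalIntegral_of_continuous' (by fun_prop) 0 1

theorem mul_exp_neg_le_exp_neg_sub_exp_neg (p q s : ℝ) :
    (q - p) * s * exp (-(q * s)) ≤ exp (-(p * s)) - exp (-(q * s)) := by
  have h := mul_le_mul_of_nonneg_right (add_one_le_exp ((q - p) * s)) (exp_pos (-(q * s))).le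
  rw [← exp_add, show (q - p) * s + -(q * s) = -(p * s) by ring] at h
  linarith

theorem exp_neg_sub_exp_neg_le_mul_exp_neg (p q s : ℝ) :
    exp (-(p * s)) - exp (-(q * s)) ≤ (q - p) * s * exp (-(p * s)) := by
  have h := mul_le_mul_of_nonneg_right (add_one_le_exp (-((q - p) * s))) (exp_pos (-(p * s))).le
  rw [← exp_add, show -((q - p) * s) + -(p * s) = -(q * s) by ring] at h
  linarith

theorem mul_gaussMoment_succ_le_sub (j : ℕ) (p q : ℝ) :
    (q - p) * gaussMoment (j + 1) q ≤ gaussMoment j p - gaussMoment j q := by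
  rw [gaussMoment, gaussMoment, gaussMoment, ← integral_sub (Continuous.intervalIntegrable
    (by fun_prop) _ _) (Continuous.intervalIntegrable (by fun_prop) _ _), ← integral_const_mul]
  refine integral_mono_on zero_le_one (Continuous.intervalIntegrable (by fun_prop) _ _)
    (Continuous.intervalIntegrable (by fun_prop) _ _) fun x _ => ?_
  have hx : 0 ≤ x ^ (2 * j) := by rw [pow_mul]; positivity
  linear_combination mul_le_mul_of_nonneg_left (mul_exp_neg_le_exp_neg_sub_exp_neg p q (x ^ 2)) hx

theorem sub_le_mul_gaussMoment_succ (j : ℕ) (p q : ℝ) :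
    gaussMoment j p - gaussMoment j q ≤ (q - p) * gaussMoment (j + 1) p := by
  rw [gaussMoment, gaussMoment, gaussMoment, ← integral_sub (Continuous.intervalIntegrable
    (by fun_prop) _ _) (Continuous.intervalIntegrable (by fun_prop) _ _), ← integral_const_mul]
  refine integral_mono_on zero_le_one (Continuous.intervalIntegrable (by fun_prop) _ _)
    (Continuous.intervalIntegrable (by fun_prop) _ _) fun x _ => ?_
  have hx : 0 ≤ x ^ (2 * j) := by rw [pow_mul]; positivity
  linear_combination mul_le_mul_of_nonneg_left (exp_neg_sub_exp_neg_le_mul_exp_neg p q (x ^ 2)) hx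

noncomputable def cosVariance (u : ℝ) : ℝ :=
  1 / 2 + gaussMoment 0 (4 * u) / 2 - gaussMoment 0 u ^ 2

theorem le_cosVariance_sub {p q : ℝ} (hpq : p ≤ q) :
    2 * (q - p) * (gaussMoment 0 q * gaussMoment 1 q - gaussMoment 1 (4 * p)) ≤
      cosVariance q - cosVariance p := by
  have h4 := sub_le_mul_gaussMoment_succ 0 (4 * p) (4 * q)
  have h1 := mul_gaussMoment_succ_le_sub 0 p q
  have hqp := gaussMoment_antitone 0 hpq
  have hJ : 0 ≤ (q - p) * gaussMoment 1 q := mul_nonneg (by linarith) (gaussMoment_nonneg 1 q)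
  have hsq : (q - p) * gaussMoment 1 q * (2 * gaussMoment 0 q) ≤
      (gaussMoment 0 p - gaussMoment 0 q) * (gaussMoment 0 p + gaussMoment 0 q) :=
    mul_le_mul h1 (by linarith) (by linarith [gaussMoment_nonneg 0 q]) (by linarith)
  unfold cosVariance
  nlinarith

theorem cosVariance_strictMonoOn_Icc_of_lt {a b : ℝ}
    (h : gaussMoment 1 (4 * a) < gaussMoment 0 b * gaussMoment 1 b) :
    StrictMonoOn cosVariance (Set.Icc a b) := by
  intro p hp q hq hpq
  have hb : gaussMoment 0 b * gaussMoment 1 b ≤ gaussMoment 0 q * gaussMoment 1 q :=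
    mul_le_mul (gaussMoment_antitone 0 hq.2) (gaussMoment_antitone 1 hq.2)
      (gaussMoment_nonneg 1 b) (gaussMoment_nonneg 0 q)
  have ha : gaussMoment 1 (4 * p) ≤ gaussMoment 1 (4 * a) :=
    gaussMoment_antitone 1 (by linarith [hp.1])
  have hpos : 0 < 2 * (q - p) * (gaussMoment 0 q * gaussMoment 1 q - gaussMoment 1 (4 * p)) :=
    mul_pos (by linarith) (by linarith)
  linarith [le_cosVariance_sub hpq.le]

theorem continuous_cosVariance : Continuous cosVariance := by
  unfold cosVariance
  fun_prop

theorem cosVariance_lt_third_of_le_half {u : ℝ} (hu₀ : 0 ≤ u) (hu : u ≤ 1 / 2) :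
    cosVariance u < 1 / 3 := by
  have hI : 0.8556 ≤ gaussMoment 0 (1 / 2) :=
    (gaussMomentTaylor_le_gaussMoment 0 (n := 5) (by decide) (by norm_num)).trans'
      (by norm_num [gaussMomentTaylor, sum_range_succ, Nat.factorial])
  have h4u : gaussMoment 0 (4 * u) ≤ 1 :=
    gaussMoment_zero_zero ▸ gaussMoment_antitone 0 (by positivity)
  have hu' := gaussMoment_antitone 0 hu
  unfold cosVariance
  nlinarith

theorem third_lt_cosVariance_of_five_le {u : ℝ} (hu : 5 ≤ u) : 1 / 3 < cosVariance u := by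
  have hI : gaussMoment 0 5 ≤ 0.3958 :=
    (gaussMoment_le_gaussMomentTaylor 0 (n := 18) (by decide) (by norm_num)).trans
      (by norm_num [gaussMomentTaylor, sum_range_succ, Nat.factorial])
  have hu' := gaussMoment_antitone 0 hu
  have := gaussMoment_nonneg 0 u
  have := gaussMoment_nonneg 0 (4 * u)
  unfold cosVariance
  nlinarith

theorem cosVariance_strictMonoOn_Icc_half_five :
    StrictMonoOn cosVariance (Set.Icc (1 / 2) 5) := by
  have h₁ : StrictMonoOn cosVariance (Set.Icc (1 / 2) 1.2) := by
    have hJa : gaussMoment 1 (4 * (1 / 2)) ≤ 0.1158 :=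
      (gaussMoment_le_gaussMomentTaylor 1 (n := 8) (by decide) (by norm_num)).trans
        (by norm_num [gaussMomentTaylor, sum_range_succ, Nat.factorial])
    have hIb : 0.7108 ≤ gaussMoment 0 1.2 :=
      (gaussMomentTaylor_le_gaussMoment 0 (n := 7) (by decide) (by norm_num)).trans'
        (by norm_num [gaussMomentTaylor, sum_range_succ, Nat.factorial])
    have hJb : 0.1706 ≤ gaussMoment 1 1.2 :=
      (gaussMomentTaylor_le_gaussMoment 1 (n := 7) (by decide) (by norm_num)).trans'
        (by norm_num [gaussMomentTaylor, sum_range_succ, Nat.factorial])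
    exact cosVariance_strictMonoOn_Icc_of_lt (by nlinarith)
  have h₂ : StrictMonoOn cosVariance (Set.Icc 1.2 2.418) := by
    have hJa : gaussMoment 1 (4 * 1.2) ≤ 0.0412 :=
      (gaussMoment_le_gaussMomentTaylor 1 (n := 18) (by decide) (by norm_num)).trans
        (by norm_num [gaussMomentTaylor, sum_range_succ, Nat.factorial])
    have hIb : 0.554 ≤ gaussMoment 0 2.418 :=
      (gaussMomentTaylor_le_gaussMoment 0 (n := 11) (by decide) (by norm_num)).trans'
        (by norm_num [gaussMomentTaylor, sum_range_succ, Nat.factorial])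
    have hJb : 0.0961 ≤ gaussMoment 1 2.418 :=
      (gaussMomentTaylor_le_gaussMoment 1 (n := 11) (by decide) (by norm_num)).trans'
        (by norm_num [gaussMomentTaylor, sum_range_succ, Nat.factorial])
    exact cosVariance_strictMonoOn_Icc_of_lt (by nlinarith)
  have h₃ : StrictMonoOn cosVariance (Set.Icc 2.418 5) := by
    have hJa : gaussMoment 1 (4 * 2.418) ≤ 0.01474 :=
      (gaussMoment_le_gaussMomentTaylor 1 (n := 30) (by decide) (by norm_num)).trans
        (by norm_num [gaussMomentTaylor, sum_range_succ, Nat.factorial])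
    have hIb : 0.3956 ≤ gaussMoment 0 5 :=
      (gaussMomentTaylor_le_gaussMoment 0 (n := 17) (by decide) (by norm_num)).trans'
        (by norm_num [gaussMomentTaylor, sum_range_succ, Nat.factorial])
    have hJb : 0.0388 ≤ gaussMoment 1 5 :=
      (gaussMomentTaylor_le_gaussMoment 1 (n := 17) (by decide) (by norm_num)).trans'
        (by norm_num [gaussMomentTaylor, sum_range_succ, Nat.factorial])
    exact cosVariance_strictMonoOn_Icc_of_lt (by nlinarith)
  have h₁₂ : StrictMonoOn cosVariance (Set.Icc (1 / 2) 2.418) := by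
    rw [← Set.Icc_union_Icc_eq_Icc (b := 1.2) (by norm_num) (by norm_num)]
    exact h₁.union h₂ (isGreatest_Icc (by norm_num)) (isLeast_Icc (by norm_num))
  rw [← Set.Icc_union_Icc_eq_Icc (b := 2.418) (by norm_num) (by norm_num)]
  exact h₁₂.union h₃ (isGreatest_Icc (by norm_num)) (isLeast_Icc (by norm_num))

theorem cosVariance_2_3495_lt_third : cosVariance 2.3495 < 1 / 3 := by
  have h4 : gaussMoment 0 (4 * 2.3495) ≤ 0.28911 :=
    (gaussMoment_le_gaussMomentTaylor 0 (n := 28) (by decide) (by norm_num)).trans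
        (by norm_num [gaussMomentTaylor, sum_range_succ, Nat.factorial])
  have h1 : 0.5607 ≤ gaussMoment 0 2.3495 :=
    (gaussMomentTaylor_le_gaussMoment 0 (n := 11) (by decide) (by norm_num)).trans'
        (by norm_num [gaussMomentTaylor, sum_range_succ, Nat.factorial])
  unfold cosVariance
  nlinarith

theorem third_lt_cosVariance_2_418 : 1 / 3 < cosVariance 2.418 := by
  have h4 : 0.28494 ≤ gaussMoment 0 (4 * 2.418) :=
    (gaussMomentTaylor_le_gaussMoment 0 (n := 29) (by decide) (by norm_num)).trans'
        (by norm_num [gaussMomentTaylor, sum_range_succ, Nat.factorial])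
  have h1 : gaussMoment 0 2.418 ≤ 0.55404 :=
    (gaussMoment_le_gaussMomentTaylor 0 (n := 12) (by decide) (by norm_num)).trans
        (by norm_num [gaussMomentTaylor, sum_range_succ, Nat.factorial])
  have := gaussMoment_nonneg 0 2.418
  unfold cosVariance
  nlinarith

theorem exists_cosVariance_eq_third : ∃ u₀ : ℝ, 2.3495 < u₀ ∧ u₀ < 2.418 ∧
    ∀ u, 0 < u → (cosVariance u = 1 / 3 ↔ u = u₀) := by
  obtain ⟨u₀, hu₀, hroot⟩ := intermediate_value_Icc (by norm_num : (2.3495 : ℝ) ≤ 2.418)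
    continuous_cosVariance.continuousOn
    ⟨cosVariance_2_3495_lt_third.le, third_lt_cosVariance_2_418.le⟩
  have hmem : ∀ u, 0 < u → cosVariance u = 1 / 3 → u ∈ Set.Icc (1 / 2 : ℝ) 5 := fun u hu h =>
    ⟨le_of_not_gt fun h' => (cosVariance_lt_third_of_le_half hu.le h'.le).ne h,
      le_of_not_gt fun h' => (third_lt_cosVariance_of_five_le h'.le).ne' h⟩
  have hu₀mem := hmem u₀ (by linarith [hu₀.1]) hroot
  have mono := cosVariance_strictMonoOn_Icc_half_five
  refine ⟨u₀, ?_, ?_, fun u hu => ⟨fun h => mono.injOn (hmem u hu h) hu₀mem (h.trans hroot.symm),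
    fun h => h ▸ hroot⟩⟩
  · exact (mono.lt_iff_lt (by norm_num) hu₀mem).1 (hroot ▸ cosVariance_2_3495_lt_third)
  · exact (mono.lt_iff_lt hu₀mem (by norm_num)).1 (hroot ▸ third_lt_cosVariance_2_418)

theorem erf_eq_mul_gaussMoment (z : ℝ) : erf z = 2 / √π * z * gaussMoment 0 (z ^ 2) := by
  have h := smul_integral_comp_mul_left (a := 0) (b := 1) (fun t => exp (-t ^ 2)) z
  simp only [mul_zero, mul_one, smul_eq_mul, mul_pow] at h
  simp [erf, gaussMoment, ← h, mul_assoc]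

theorem erf_variance_eq_cosVariance {m : ℝ} (hm : 0 < m) :
    1 / 2 + erf (√2 * m * π) / (4 * √(2 * π) * m) - (erf (m * π / √2) / (m * √(2 * π))) ^ 2 =
      cosVariance (π ^ 2 * m ^ 2 / 2) := by
  have h2 : √2 ^ 2 = 2 := sq_sqrt zero_le_two
  have hπ : √π ^ 2 = π := sq_sqrt pi_pos.le
  have e₁ : (√2 * m * π) ^ 2 = 4 * (π ^ 2 * m ^ 2 / 2) := by rw [mul_pow, mul_pow, h2]; ring
  have e₂ : (m * π / √2) ^ 2 = π ^ 2 * m ^ 2 / 2 := by rw [div_pow, mul_pow, h2]; ring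
  rw [erf_eq_mul_gaussMoment, erf_eq_mul_gaussMoment, e₁, e₂, sqrt_mul zero_le_two, cosVariance]
  have : 0 < √π := sqrt_pos.2 pi_pos
  field_simp
  rw [show √2 ^ 4 = (√2 ^ 2) ^ 2 by ring, show √π ^ 4 = (√π ^ 2) ^ 2 by ring, h2, hπ]
  ring

/-- There is a unique `m > 0` with
`1/3 = 1/2 + erf(√2 m π)/(4 √(2π) m) − (erf(mπ/√2)/(m√(2π)))²`, and it lies in `(0.69, 0.70)`. -/
theorem exists_unique_variance_matching_weight :
    (∃! m : ℝ, 0 < m ∧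
      (1 / 3 : ℝ) = 1 / 2 + erf (Real.sqrt 2 * m * π) / (4 * Real.sqrt (2 * π) * m) -
        (erf (m * π / Real.sqrt 2) / (m * Real.sqrt (2 * π))) ^ 2) ∧
    ∀ m : ℝ, 0 < m →
      (1 / 3 : ℝ) = 1 / 2 + erf (Real.sqrt 2 * m * π) / (4 * Real.sqrt (2 * π) * m) -
        (erf (m * π / Real.sqrt 2) / (m * Real.sqrt (2 * π))) ^ 2 →
      0.69 < m ∧ m < 0.70 := by
  obtain ⟨u₀, hlo, hhi, hroot⟩ := exists_cosVariance_eq_third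
  have key : ∀ m : ℝ, 0 < m → ((1 / 3 : ℝ) = 1 / 2 + erf (√2 * m * π) / (4 * √(2 * π) * m) -
      (erf (m * π / √2) / (m * √(2 * π))) ^ 2 ↔ π ^ 2 * m ^ 2 / 2 = u₀) := fun m hm => by
    rw [erf_variance_eq_cosVariance hm, eq_comm, hroot _ (by positivity)]
  have hm₀ : 0 < √(2 * u₀) / π := by have := pi_pos; positivity
  refine ⟨⟨√(2 * u₀) / π, ⟨hm₀, (key _ hm₀).2 ?_⟩, fun m ⟨hm, h⟩ => ?_⟩, fun m hm h => ?_⟩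
  · rw [div_pow, sq_sqrt (by linarith)]
    field_simp
  · rw [eq_div_iff pi_ne_zero, ← (key m hm).1 h, show 2 * (π ^ 2 * m ^ 2 / 2) = (m * π) ^ 2 by ring,
      sqrt_sq (by positivity)]
  · have hu := (key m hm).1 h
    have hπ₁ : 9.8696 < π ^ 2 := by nlinarith [pi_gt_d6]
    have hπ₂ : π ^ 2 < 9.86961 := by nlinarith [pi_lt_d6, pi_pos]
    have hlo' : 0.69 ^ 2 < m ^ 2 := by nlinarith
    have hhi' : m ^ 2 < 0.70 ^ 2 := by nlinarith
    constructor <;> nlinarith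
end

section
/- Let N ≥ 1, let w₁, …, w_N be pairwise distinct positive reals, let λ₁, …, λ_N be nonzero reals, let φ₀, φ₁, …, φ_N be reals, and define f(x) = φ₀ + Σ_{k=1}^N λ_k cos(π w_k x + φ_k). If f is 2-periodic, i.e., f(x + 2) = f(x) for all x ∈ ℝ, then every w_k is a (positive) integer. -/
/-!
Shifting by the period turns each neuron into a sinusoid of the same frequency:
`cos (π w (x + 2) + φ) - cos (π w x + φ) = -2 sin (π w) sin (π w x + φ + π w)`, so periodicity says
that a sum of sinusoids with amplitudes `-2 λ_k sin (π w_k)` vanishes identically. Differentiating twice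
multiplies the `k`-th amplitude by `-(π w_k)²`; the resulting Vandermonde system in the distinct
numbers `(π w_k)²` forces every amplitude to vanish, hence `sin (π w_k) = 0` and `w_k ∈ ℤ`.
-/

open Real Function

section SinusoidSums

variable {ι : Type*} [Fintype ι]

theorem hasDerivAt_sum_mul_sin (a b c : ι → ℝ) (x : ℝ) :
    HasDerivAt (fun x => ∑ k, c k * sin (a k * x + b k))
      (∑ k, c k * a k * cos (a k * x + b k)) x := by
  refine HasDerivAt.fun_sum fun k _ => ?_
  exact ((((hasDerivAt_id' x).const_mul (a k)).add_const (b k)).sin.const_mul (c k)).congr_deriv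
    (by ring)

theorem hasDerivAt_sum_mul_cos (a b c : ι → ℝ) (x : ℝ) :
    HasDerivAt (fun x => ∑ k, c k * cos (a k * x + b k))
      (-∑ k, c k * a k * sin (a k * x + b k)) x := by
  rw [← Finset.sum_neg_distrib]
  refine HasDerivAt.fun_sum fun k _ => ?_
  exact ((((hasDerivAt_id' x).const_mul (a k)).add_const (b k)).cos.const_mul (c k)).congr_deriv
    (by ring)

variable {a b c : ι → ℝ}

theorem sum_mul_sq_mul_sin_eq_zero (h : ∀ x, ∑ k, c k * sin (a k * x + b k) = 0) (x : ℝ) :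
    ∑ k, c k * a k ^ 2 * sin (a k * x + b k) = 0 := by
  have hcos : ∀ y, ∑ k, c k * a k * cos (a k * y + b k) = 0 := fun y =>
    (hasDerivAt_sum_mul_sin a b c y).unique (by simpa only [funext h] using hasDerivAt_const y 0)
  have hsin := (hasDerivAt_sum_mul_cos a b (fun k => c k * a k) x).unique
    (by simpa only [funext hcos] using hasDerivAt_const x 0)
  simpa only [neg_eq_zero, mul_assoc, sq] using hsin

theorem sum_mul_pow_mul_sin_eq_zero (h : ∀ x, ∑ k, c k * sin (a k * x + b k) = 0) (m : ℕ)
    (x : ℝ) : ∑ k, c k * (a k ^ 2) ^ m * sin (a k * x + b k) = 0 := by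
  induction m generalizing x with
  | zero => simpa using h x
  | succ m ih =>
    simpa only [pow_succ, mul_assoc] using sum_mul_sq_mul_sin_eq_zero ih x

end SinusoidSums

theorem eq_zero_of_forall_sum_mul_sin_eq_zero {n : ℕ} {a b c : Fin n → ℝ} (ha : Injective a)
    (ha_pos : ∀ k, 0 < a k) (h : ∀ x, ∑ k, c k * sin (a k * x + b k) = 0) : c = 0 := by
  funext k
  have hsq : Injective fun j => a j ^ 2 := fun i j hij =>
    ha ((sq_eq_sq₀ (ha_pos i).le (ha_pos j).le).1 hij)
  set x₀ := (π / 2 - b k) / a k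
  have hterms : (fun j => c j * sin (a j * x₀ + b j)) = 0 :=
    Matrix.eq_zero_of_forall_pow_sum_mul_pow_eq_zero hsq fun m => by
      simpa only [mul_right_comm] using sum_mul_pow_mul_sin_eq_zero h m x₀
  have hx₀ : sin (a k * x₀ + b k) = 1 := by
    rw [mul_div_cancel₀ _ (ha_pos k).ne', sub_add_cancel, sin_pi_div_two]
  simpa [hx₀] using congrFun hterms k

theorem cos_add_two_sub_cos (w φ x : ℝ) :
    cos (π * w * (x + 2) + φ) - cos (π * w * x + φ) =
      -2 * sin (π * w) * sin (π * w * x + (φ + π * w)) := by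
  rw [cos_sub_cos]
  ring_nf

theorem exists_nat_eq_of_sin_pi_mul_eq_zero {w : ℝ} (hw : 0 < w) (h : sin (π * w) = 0) :
    ∃ n : ℕ, 0 < n ∧ w = n := by
  obtain ⟨m, hm⟩ := sin_eq_zero_iff.1 h
  have hwm : w = m := by
    rw [mul_comm] at hm
    exact (mul_left_cancel₀ pi_ne_zero hm).symm
  have hm_pos : 0 < m := by exact_mod_cast hwm ▸ hw
  lift m to ℕ using hm_pos.le
  exact ⟨m, by exact_mod_cast hm_pos, by exact_mod_cast hwm⟩

theorem periodic_fnn_weights_are_integers_general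
    (N : ℕ) (w lam φ : Fin N → ℝ) (φ₀ : ℝ)
    (hw_distinct : Function.Injective w)
    (hw_pos : ∀ k, 0 < w k)
    (hlam : ∀ k, lam k ≠ 0)
    (f : ℝ → ℝ)
    (hf : ∀ x : ℝ, f x = φ₀ + ∑ k : Fin N, lam k * Real.cos (π * w k * x + φ k))
    (hper : ∀ x : ℝ, f (x + 2) = f x) :
    ∀ k, ∃ n : ℕ, 0 < n ∧ w k = n := by
  have hshift : ∀ x, ∑ k, (-2 * lam k * sin (π * w k)) *
      sin (π * w k * x + (φ k + π * w k)) = 0 := by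
    intro x
    calc _ = ∑ k, lam k * (cos (π * w k * (x + 2) + φ k) - cos (π * w k * x + φ k)) := by
          simp only [cos_add_two_sub_cos, ← mul_assoc, mul_comm (lam _) (-2)]
      _ = f (x + 2) - f x := by simp only [hf, mul_sub, Finset.sum_sub_distrib]; ring
      _ = 0 := sub_eq_zero.2 (hper x)
  have hamp := eq_zero_of_forall_sum_mul_sin_eq_zero
    (fun i j hij => hw_distinct (mul_left_cancel₀ pi_ne_zero hij))
    (fun k => mul_pos pi_pos (hw_pos k)) hshift
  intro k
  exact exists_nat_eq_of_sin_pi_mul_eq_zero (hw_pos k) (by simpa [hlam k] using congrFun hamp k)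

/-- If the output `f(x) = φ₀ + Σ_k λ_k cos(π w_k x + φ_k)` of a one-hidden-layer Fourier
Neural Network, with pairwise distinct positive weights `w_k` and nonzero weights `λ_k`, is
2-periodic, then every weight `w_k` is a positive integer. -/
theorem periodic_fnn_weights_are_integers
    (N : ℕ) (hN : 1 ≤ N) (w lam φ : Fin N → ℝ) (φ₀ : ℝ)
    (hw_distinct : Function.Injective w)
    (hw_pos : ∀ k, 0 < w k)
    (hlam : ∀ k, lam k ≠ 0)
    (f : ℝ → ℝ)
    (hf : ∀ x : ℝ, f x = φ₀ + ∑ k : Fin N, lam k * Real.cos (π * w k * x + φ k))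
    (hper : ∀ x : ℝ, f (x + 2) = f x) :
    ∀ k, ∃ n : ℕ, 0 < n ∧ w k = n :=
  periodic_fnn_weights_are_integers_general N w lam φ φ₀ hw_distinct hw_pos hlam f hf hper
end
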